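/- (Pointwise helicity conservation law in ℝ³.) Let u : ℝ × ℝ³ → ℝ³ be smooth with ∂ₜu + (u·∇)u = −∇h for some twice continuously differentiable h : ℝ × ℝ³ → ℝ, and write ω = curl u. Then for all (t,x): ∂ₜ⟨u, ω⟩ + div( ⟨u, ω⟩ u + (h − ½⟨u,u⟩) ω ) = 0, where all functions are evaluated at (t,x) and div is the spatial divergence. -/

import Mathlib

open scoped RealInnerProductSpace


/-- The curl of a vector field on `ℝ³`. -/
noncomputable def curl3 (w : EuclideanSpace ℝ (Fin 3) → EuclideanSpace ℝ (Fin 3))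
    (x : EuclideanSpace ℝ (Fin 3)) : EuclideanSpace ℝ (Fin 3) :=
  (WithLp.equiv 2 (Fin 3 → ℝ)).symm
    ![fderiv ℝ w x (EuclideanSpace.single 1 1) 2 - fderiv ℝ w x (EuclideanSpace.single 2 1) 1,
      fderiv ℝ w x (EuclideanSpace.single 2 1) 0 - fderiv ℝ w x (EuclideanSpace.single 0 1) 2,
      fderiv ℝ w x (EuclideanSpace.single 0 1) 1 - fderiv ℝ w x (EuclideanSpace.single 1 1) 0]

/-- The divergence of a vector field on `ℝ³`. -/
noncomputable def div3 (F : EuclideanSpace ℝ (Fin 3) → EuclideanSpace ℝ (Fin 3))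
    (x : EuclideanSpace ℝ (Fin 3)) : ℝ :=
  ∑ i : Fin 3, fderiv ℝ F x (EuclideanSpace.single i 1) i

noncomputable section HelicityHelpers

abbrev ESP3 := EuclideanSpace ℝ (Fin 3)

/-- partial derivative in direction `v`, as a function -/
def pd {α : Type*} [NormedAddCommGroup α] [NormedSpace ℝ α]
    (v : ℝ × ESP3) (f : ℝ × ESP3 → α) : ℝ × ESP3 → α := fun p => fderiv ℝ f p v

def sdir (i : Fin 3) : ℝ × ESP3 := (0, EuclideanSpace.single i 1)
def tdir : ℝ × ESP3 := ((1:ℝ), 0)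

variable {α : Type*} [NormedAddCommGroup α] [NormedSpace ℝ α]

lemma hasDerivAt_slice (G : ℝ × ESP3 → α) {t : ℝ} {x : ESP3}
    (hG : DifferentiableAt ℝ G (t, x)) :
    HasDerivAt (fun τ => G (τ, x)) (pd tdir G (t, x)) t := by
  have h1 : HasDerivAt (fun τ : ℝ => (τ, x)) ((1:ℝ), (0:ESP3)) t :=
    (hasDerivAt_id t).prodMk (hasDerivAt_const t x)
  exact hG.hasFDerivAt.comp_hasDerivAt t h1

lemma fderiv_slice (G : ℝ × ESP3 → α) {t : ℝ} {x : ESP3}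
    (hG : DifferentiableAt ℝ G (t, x)) (v : ESP3) :
    fderiv ℝ (fun y => G (t, y)) x v = fderiv ℝ G (t, x) (0, v) := by
  have h1 : HasFDerivAt (fun y : ESP3 => (t, y))
      ((0 : ESP3 →L[ℝ] ℝ).prod (ContinuousLinearMap.id ℝ ESP3)) x :=
    (hasFDerivAt_const t x).prodMk (hasFDerivAt_id x)
  have h2 := (hG.hasFDerivAt.comp x h1).fderiv
  have h3 : (fun y => G (t, y)) = (G ∘ fun y : ESP3 => (t, y)) := rfl
  rw [h3, h2]; rfl

lemma differentiableAt_slice (G : ℝ × ESP3 → α) {t : ℝ} {x : ESP3}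
    (hG : DifferentiableAt ℝ G (t, x)) :
    DifferentiableAt ℝ (fun y => G (t, y)) x := by
  have h1 : HasFDerivAt (fun y : ESP3 => (t, y))
      ((0 : ESP3 →L[ℝ] ℝ).prod (ContinuousLinearMap.id ℝ ESP3)) x :=
    (hasFDerivAt_const t x).prodMk (hasFDerivAt_id x)
  exact (hG.hasFDerivAt.comp x h1).differentiableAt

lemma fderiv_component {β : Type*} [NormedAddCommGroup β] [NormedSpace ℝ β]
    (w : β → ESP3) {z : β} (hw : DifferentiableAt ℝ w z) (v : β) (i : Fin 3) :
    fderiv ℝ (fun y => w y i) z v = fderiv ℝ w z v i := by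
  have h2 := ((EuclideanSpace.proj (𝕜 := ℝ) i).hasFDerivAt.comp z hw.hasFDerivAt).fderiv
  have h3 : (fun y => w y i) = (⇑(EuclideanSpace.proj (𝕜 := ℝ) i) ∘ w) := rfl
  rw [h3, h2]; rfl

lemma pd_comm (f : ℝ × ESP3 → ℝ) (hf : ContDiff ℝ 2 f) (v w : ℝ × ESP3) (p : ℝ × ESP3) :
    pd v (pd w f) p = pd w (pd v f) p := by
  have hdf : DifferentiableAt ℝ (fderiv ℝ f) p :=
    ((hf.fderiv_right (m := 1) (by norm_num)).differentiable (by norm_num)).differentiableAt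
  have key : ∀ a b : ℝ × ESP3, pd a (pd b f) p = fderiv ℝ (fderiv ℝ f) p a b := by
    intro a b
    have h1 : (pd b f) = (⇑(ContinuousLinearMap.apply ℝ ℝ b) ∘ fderiv ℝ f) := rfl
    have h2 := ((ContinuousLinearMap.apply ℝ ℝ b).hasFDerivAt.comp p hdf.hasFDerivAt).fderiv
    show fderiv ℝ (pd b f) p a = _
    rw [h1, h2]; rfl
  rw [key, key]
  exact second_derivative_symmetric (fun y => (hf.differentiable (by norm_num) y).hasFDerivAt)
    hdf.hasFDerivAt v w

lemma pd_mul (f g : ℝ × ESP3 → ℝ) {p : ℝ × ESP3} (hf : DifferentiableAt ℝ f p)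
    (hg : DifferentiableAt ℝ g p) (v : ℝ × ESP3) :
    pd v (fun q => f q * g q) p = f p * pd v g p + g p * pd v f p := by
  simp [pd, fderiv_fun_mul hf hg]

lemma pd_sum (f : Fin 3 → (ℝ × ESP3 → ℝ)) {p : ℝ × ESP3}
    (hf : ∀ i, DifferentiableAt ℝ (f i) p) (v : ℝ × ESP3) :
    pd v (fun q => ∑ i, f i q) p = ∑ i, pd v (f i) p := by
  simp [pd, fderiv_fun_sum (fun i _ => hf i)]

lemma pd_sub (f g : ℝ × ESP3 → ℝ) {p : ℝ × ESP3} (hf : DifferentiableAt ℝ f p)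
    (hg : DifferentiableAt ℝ g p) (v : ℝ × ESP3) :
    pd v (fun q => f q - g q) p = pd v f p - pd v g p := by
  simp [pd, fderiv_fun_sub hf hg]

lemma pd_add (f g : ℝ × ESP3 → ℝ) {p : ℝ × ESP3} (hf : DifferentiableAt ℝ f p)
    (hg : DifferentiableAt ℝ g p) (v : ℝ × ESP3) :
    pd v (fun q => f q + g q) p = pd v f p + pd v g p := by
  simp [pd, fderiv_fun_add hf hg]

lemma pd_neg (f : ℝ × ESP3 → ℝ) {p : ℝ × ESP3} (v : ℝ × ESP3) :
    pd v (fun q => -f q) p = -pd v f p := by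
  simp [pd, fderiv_neg]

lemma pd_const_mul (f : ℝ × ESP3 → ℝ) {p : ℝ × ESP3} (hf : DifferentiableAt ℝ f p)
    (c : ℝ) (v : ℝ × ESP3) :
    pd v (fun q => c * f q) p = c * pd v f p := by
  simp [pd, fderiv_const_mul hf c]

lemma dir_decomp (w : ESP3) : ((0 : ℝ), w) = ∑ j, w j • sdir j := by
  rw [Prod.ext_iff]
  constructor
  · simp [sdir, Prod.fst_sum]
  · simp only [sdir, Prod.snd_sum, Prod.smul_mk, smul_zero]
    ext k
    simp [EuclideanSpace.single_apply, Fin.sum_univ_three]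
    fin_cases k <;> simp

lemma pd_dir_decomp (f : ℝ × ESP3 → ℝ) {p : ℝ × ESP3} (w : ESP3) :
    fderiv ℝ f p (0, w) = ∑ j, w j * pd (sdir j) f p := by
  rw [dir_decomp w, map_sum]
  simp [pd]

lemma contDiff_pd {n : WithTop ℕ∞} (f : ℝ × ESP3 → ℝ) (hf : ContDiff ℝ (n + 1) f)
    (v : ℝ × ESP3) : ContDiff ℝ n (pd v f) := by
  have h1 : pd v f = (⇑(ContinuousLinearMap.apply ℝ ℝ v) ∘ fderiv ℝ f) := rfl
  rw [h1]
  exact (ContinuousLinearMap.apply ℝ ℝ v).contDiff.comp (hf.fderiv_right le_rfl)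

lemma contDiff_pd_one (f : ℝ × ESP3 → ℝ) (hf : ContDiff ℝ 2 f) (v : ℝ × ESP3) :
    ContDiff ℝ 1 (pd v f) := contDiff_pd f (hf.of_le (by norm_num)) v

lemma contDiff_pd_two (f : ℝ × ESP3 → ℝ) (hf : ContDiff ℝ 3 f) (v : ℝ × ESP3) :
    ContDiff ℝ 2 (pd v f) := contDiff_pd f (hf.of_le (by norm_num)) v

/-- component functions of the velocity field -/
def UU (u : ℝ × ESP3 → ESP3) (i : Fin 3) : ℝ × ESP3 → ℝ := fun p => u p i

/-- vorticity components -/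
def WW (u : ℝ × ESP3 → ESP3) : Fin 3 → ℝ × ESP3 → ℝ :=
  ![fun p => pd (sdir 1) (UU u 2) p - pd (sdir 2) (UU u 1) p,
    fun p => pd (sdir 2) (UU u 0) p - pd (sdir 0) (UU u 2) p,
    fun p => pd (sdir 0) (UU u 1) p - pd (sdir 1) (UU u 0) p]

/-- helicity density -/
def TT (u : ℝ × ESP3 → ESP3) : ℝ × ESP3 → ℝ := fun p => ∑ i, UU u i p * WW u i p

/-- Bernoulli-type multiplier -/
def SS (u : ℝ × ESP3 → ESP3) (h : ℝ × ESP3 → ℝ) : ℝ × ESP3 → ℝ :=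
  fun p => h p - (1/2) * ∑ i, UU u i p * UU u i p

/-- flux components -/
def PHI (u : ℝ × ESP3 → ESP3) (h : ℝ × ESP3 → ℝ) (i : Fin 3) : ℝ × ESP3 → ℝ :=
  fun p => TT u p * UU u i p + SS u h p * WW u i p

end HelicityHelpers

section CurlFacts

variable {u : ℝ × ESP3 → ESP3}

lemma curl_comp (hu : ContDiff ℝ (⊤ : ℕ∞) u) (s : ℝ) (y : ESP3) (i : Fin 3) :
    curl3 (fun z => u (s, z)) y i = WW u i (s, y) := by
  have hud : DifferentiableAt ℝ u (s, y) := (hu.differentiable (by simp)).differentiableAt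
  have base : ∀ (j k : Fin 3), fderiv ℝ (fun z => u (s, z)) y (EuclideanSpace.single j 1) k
      = pd (sdir j) (UU u k) (s, y) := by
    intro j k
    rw [fderiv_slice u hud]
    rw [← fderiv_component u hud (0, EuclideanSpace.single j 1) k]
    rfl
  fin_cases i <;>
    simp only [curl3, WithLp.equiv_symm_apply, PiLp.toLp_apply, WW, Fin.isValue, Matrix.cons_val_zero,
      Matrix.cons_val_one, Matrix.head_cons, Matrix.cons_val_two, Matrix.tail_cons,
      Fin.zero_eta, Fin.mk_one, Fin.reduceFinMk] <;>
    rw [base, base]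

lemma inner_TT (hu : ContDiff ℝ (⊤ : ℕ∞) u) (s : ℝ) (y : ESP3) :
    ⟪u (s, y), curl3 (fun z => u (s, z)) y⟫ = TT u (s, y) := by
  simp only [PiLp.inner_apply, RCLike.inner_apply, conj_trivial, TT]
  refine Finset.sum_congr rfl fun i _ => ?_
  rw [curl_comp hu s y i]
  exact mul_comm _ _

end CurlFacts

/-- Pointwise helicity conservation law in `ℝ³`. -/
theorem helicity_local_conservation_law
    (u : ℝ × EuclideanSpace ℝ (Fin 3) → EuclideanSpace ℝ (Fin 3))
    (hu : ContDiff ℝ (⊤ : ℕ∞) u)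
    (h : ℝ × EuclideanSpace ℝ (Fin 3) → ℝ) (hh : ContDiff ℝ 2 h)
    (euler : ∀ (t : ℝ) (x : EuclideanSpace ℝ (Fin 3)),
      deriv (fun τ => u (τ, x)) t + fderiv ℝ (fun y => u (t, y)) x (u (t, x))
        = -gradient (fun y => h (t, y)) x) :
    ∀ (t : ℝ) (x : EuclideanSpace ℝ (Fin 3)),
      deriv (fun τ => ⟪u (τ, x), curl3 (fun y => u (τ, y)) x⟫) t
        + div3 (fun y =>
            ⟪u (t, y), curl3 (fun z => u (t, z)) y⟫ • u (t, y)
              + (h (t, y) - (1 / 2) * ⟪u (t, y), u (t, y)⟫) • curl3 (fun z => u (t, z)) y) x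
        = 0 := by
  intro t x
  -- differentiability bookkeeping
  have hu' : ∀ q, DifferentiableAt ℝ u q := fun q => (hu.differentiable (by simp)).differentiableAt
  have hU : ∀ i, ContDiff ℝ 3 (UU u i) :=
    fun i => (EuclideanSpace.proj (𝕜 := ℝ) i).contDiff.comp (hu.of_le (WithTop.coe_le_coe.mpr le_top))
  have hU2 : ∀ i, ContDiff ℝ 2 (UU u i) := fun i => (hU i).of_le (by norm_num)
  have dU : ∀ i q, DifferentiableAt ℝ (UU u i) q :=
    fun i q => ((hU i).differentiable (by norm_num)).differentiableAt
  have hpdU : ∀ v i, ContDiff ℝ 2 (pd v (UU u i)) := fun v i => contDiff_pd_two _ (hU i) v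
  have dpdU : ∀ v i q, DifferentiableAt ℝ (pd v (UU u i)) q :=
    fun v i q => ((hpdU v i).differentiable (by norm_num)).differentiableAt
  have dpd2U : ∀ v w i q, DifferentiableAt ℝ (pd w (pd v (UU u i))) q :=
    fun v w i q => ((contDiff_pd_one _ (hpdU v i) w).differentiable (by norm_num)).differentiableAt
  have dh : ∀ q, DifferentiableAt ℝ h q := fun q => (hh.differentiable (by norm_num)).differentiableAt
  have dpdh : ∀ v q, DifferentiableAt ℝ (pd v h) q :=
    fun v q => ((contDiff_pd_one h hh v).differentiable (by norm_num)).differentiableAt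
  have hW : ∀ i, ContDiff ℝ 2 (WW u i) := by
    intro i
    fin_cases i
    · exact (hpdU (sdir 1) 2).sub (hpdU (sdir 2) 1)
    · exact (hpdU (sdir 2) 0).sub (hpdU (sdir 0) 2)
    · exact (hpdU (sdir 0) 1).sub (hpdU (sdir 1) 0)
  have dW : ∀ i q, DifferentiableAt ℝ (WW u i) q :=
    fun i q => ((hW i).differentiable (by norm_num)).differentiableAt
  have hT : ContDiff ℝ 2 (TT u) := ContDiff.sum (fun i _ => (hU2 i).mul (hW i))
  have dT : ∀ q, DifferentiableAt ℝ (TT u) q :=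
    fun q => (hT.differentiable (by norm_num)).differentiableAt
  have dS : ∀ q, DifferentiableAt ℝ (SS u h) q := by
    intro q
    exact ((dh q).sub (((DifferentiableAt.fun_sum
      (fun j _ => (dU j q).mul (dU j q))).const_mul _)))
  have dPHI : ∀ i q, DifferentiableAt ℝ (PHI u h i) q :=
    fun i q => ((dT q).mul (dU i q)).add ((dS q).mul (dW i q))
  -- componentwise Euler equation
  have e1 : ∀ (i : Fin 3) (q : ℝ × ESP3),
      pd tdir (UU u i) q + ∑ j, UU u j q * pd (sdir j) (UU u i) q = - pd (sdir i) h q := by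
    intro i q
    obtain ⟨tt, xx⟩ := q
    have h1 := euler tt xx
    have h2 := congrArg (fun z : ESP3 => z i) h1
    simp only [PiLp.add_apply, PiLp.neg_apply] at h2
    have h3 : deriv (fun τ => u (τ, xx)) tt = pd tdir u (tt, xx) :=
      (hasDerivAt_slice u (hu' _)).deriv
    have h4 : fderiv ℝ (fun y => u (tt, y)) xx (u (tt, xx))
        = fderiv ℝ u (tt, xx) (0, u (tt, xx)) := fderiv_slice u (hu' _) _
    have h6 : pd tdir u (tt, xx) i = pd tdir (UU u i) (tt, xx) :=
      (fderiv_component u (hu' _) tdir i).symm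
    have h7 : fderiv ℝ u (tt, xx) (0, u (tt, xx)) i
        = ∑ j, UU u j (tt, xx) * pd (sdir j) (UU u i) (tt, xx) := by
      rw [← fderiv_component u (hu' _) (0, u (tt, xx)) i]
      exact pd_dir_decomp (UU u i) (u (tt, xx))
    have h5 : gradient (fun y => h (tt, y)) xx i = pd (sdir i) h (tt, xx) := by
      have ha : ⟪gradient (fun y => h (tt, y)) xx, EuclideanSpace.single i 1⟫
          = fderiv ℝ (fun y => h (tt, y)) xx (EuclideanSpace.single i 1) :=
        InnerProductSpace.toDual_symm_apply
      have hb : ⟪gradient (fun y => h (tt, y)) xx, EuclideanSpace.single i 1⟫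
          = gradient (fun y => h (tt, y)) xx i := by
        rw [EuclideanSpace.inner_single_right]; simp
      rw [← hb, ha, fderiv_slice h (dh _)]
      rfl
    rw [h3, h6, h4, h7, h5] at h2
    exact h2
  have e1fun : ∀ i : Fin 3,
      (fun q => pd tdir (UU u i) q + ∑ j, UU u j q * pd (sdir j) (UU u i) q)
        = (fun q => - pd (sdir i) h q) := fun i => funext fun q => e1 i q
  -- spatial derivative of the Euler equation
  have e2 : ∀ (k i : Fin 3),
      pd tdir (pd (sdir k) (UU u i)) (t, x) = - pd (sdir k) (pd (sdir i) h) (t, x)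
        - ∑ j, (UU u j (t, x) * pd (sdir k) (pd (sdir j) (UU u i)) (t, x)
            + pd (sdir j) (UU u i) (t, x) * pd (sdir k) (UU u j) (t, x)) := by
    intro k i
    have hC := congrArg (fun f => pd (sdir k) f (t, x)) (e1fun i)
    have dsum : DifferentiableAt ℝ (fun q => ∑ j, UU u j q * pd (sdir j) (UU u i) q) (t, x) :=
      DifferentiableAt.fun_sum (fun j _ => (dU j _).mul (dpdU (sdir j) i _))
    have hL1 : pd (sdir k)
        (fun q => pd tdir (UU u i) q + ∑ j, UU u j q * pd (sdir j) (UU u i) q) (t, x)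
        = pd (sdir k) (pd tdir (UU u i)) (t, x)
          + pd (sdir k) (fun q => ∑ j, UU u j q * pd (sdir j) (UU u i) q) (t, x) :=
      pd_add _ _ (dpdU tdir i _) dsum _
    have hL2 : pd (sdir k) (fun q => ∑ j, UU u j q * pd (sdir j) (UU u i) q) (t, x)
        = ∑ j, pd (sdir k) (fun q => UU u j q * pd (sdir j) (UU u i) q) (t, x) :=
      pd_sum _ (fun j => (dU j _).mul (dpdU (sdir j) i _)) _
    have hL3 : ∀ j : Fin 3, pd (sdir k) (fun q => UU u j q * pd (sdir j) (UU u i) q) (t, x)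
        = UU u j (t, x) * pd (sdir k) (pd (sdir j) (UU u i)) (t, x)
          + pd (sdir j) (UU u i) (t, x) * pd (sdir k) (UU u j) (t, x) :=
      fun j => pd_mul _ _ (dU j _) (dpdU (sdir j) i _) _
    have hR : pd (sdir k) (fun q => - pd (sdir i) h q) (t, x)
        = - pd (sdir k) (pd (sdir i) h) (t, x) := pd_neg _ _
    rw [hL1, hL2, hR] at hC
    rw [Finset.sum_congr rfl (fun j _ => hL3 j)] at hC
    have hsw : pd (sdir k) (pd tdir (UU u i)) (t, x) = pd tdir (pd (sdir k) (UU u i)) (t, x) :=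
      pd_comm (UU u i) (hU2 i) (sdir k) tdir (t, x)
    rw [hsw] at hC
    linarith [hC]
  have e1' : ∀ i : Fin 3, pd tdir (UU u i) (t, x)
      = - pd (sdir i) h (t, x) - ∑ j, UU u j (t, x) * pd (sdir j) (UU u i) (t, x) := by
    intro i
    have := e1 i (t, x)
    linarith [this]
  -- rewrite the time-derivative term
  have key1 : (fun τ => ⟪u (τ, x), curl3 (fun y => u (τ, y)) x⟫) = fun τ => TT u (τ, x) :=
    funext fun τ => inner_TT hu τ x
  rw [key1, (hasDerivAt_slice (TT u) (dT (t, x))).deriv]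
  -- rewrite the flux term
  have key2 : (fun y => ⟪u (t, y), curl3 (fun z => u (t, z)) y⟫ • u (t, y)
      + (h (t, y) - (1 / 2) * ⟪u (t, y), u (t, y)⟫) • curl3 (fun z => u (t, z)) y)
      = fun y => (EuclideanSpace.equiv (Fin 3) ℝ).symm (fun i => PHI u h i (t, y)) := by
    funext y
    apply PiLp.ext
    intro i
    simp only [PiLp.add_apply, PiLp.smul_apply, smul_eq_mul]
    rw [inner_TT hu t y, curl_comp hu t y i]
    have hcmp : (EuclideanSpace.equiv (Fin 3) ℝ).symm (fun j => PHI u h j (t, y)) i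
        = PHI u h i (t, y) := rfl
    rw [hcmp]
    have hself : ⟪u (t, y), u (t, y)⟫ = ∑ j, UU u j (t, y) * UU u j (t, y) := by
      simp only [PiLp.inner_apply, RCLike.inner_apply, conj_trivial]
      rfl
    rw [hself]
    rfl
  rw [key2]
  have key3 : div3 (fun y => (EuclideanSpace.equiv (Fin 3) ℝ).symm (fun i => PHI u h i (t, y))) x
      = ∑ i, pd (sdir i) (PHI u h i) (t, x) := by
    unfold div3
    refine Finset.sum_congr rfl fun i _ => ?_
    have hXd : DifferentiableAt ℝ
        (fun y => (EuclideanSpace.equiv (Fin 3) ℝ).symm (fun j => PHI u h j (t, y))) x := by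
      apply DifferentiableAt.comp
      · exact ((EuclideanSpace.equiv (Fin 3) ℝ).symm :
          (Fin 3 → ℝ) →L[ℝ] ESP3).differentiableAt
      · exact differentiableAt_pi.mpr fun j =>
          differentiableAt_slice (PHI u h j) (dPHI j (t, x))
    rw [← fderiv_component _ hXd (EuclideanSpace.single i 1) i]
    have hcomp : (fun y => (EuclideanSpace.equiv (Fin 3) ℝ).symm (fun j => PHI u h j (t, y)) i)
        = fun y => PHI u h i (t, y) := rfl
    rw [hcomp, fderiv_slice (PHI u h i) (dPHI i (t, x))]
    rfl
  rw [key3]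
  -- expand all derivatives into atomic partials
  have hTexp : ∀ v, pd v (TT u) (t, x) = ∑ i,
      (UU u i (t, x) * pd v (WW u i) (t, x) + WW u i (t, x) * pd v (UU u i) (t, x)) := by
    intro v
    have h1 : pd v (TT u) (t, x) = ∑ i, pd v (fun q => UU u i q * WW u i q) (t, x) :=
      pd_sum (fun i q => UU u i q * WW u i q) (fun i => (dU i _).mul (dW i _)) v
    rw [h1]
    exact Finset.sum_congr rfl fun i _ => pd_mul _ _ (dU i _) (dW i _) v
  have hW0e : ∀ v, pd v (WW u 0) (t, x)
      = pd v (pd (sdir 1) (UU u 2)) (t, x) - pd v (pd (sdir 2) (UU u 1)) (t, x) :=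
    fun v => pd_sub _ _ (dpdU _ _ _) (dpdU _ _ _) v
  have hW1e : ∀ v, pd v (WW u 1) (t, x)
      = pd v (pd (sdir 2) (UU u 0)) (t, x) - pd v (pd (sdir 0) (UU u 2)) (t, x) :=
    fun v => pd_sub _ _ (dpdU _ _ _) (dpdU _ _ _) v
  have hW2e : ∀ v, pd v (WW u 2) (t, x)
      = pd v (pd (sdir 0) (UU u 1)) (t, x) - pd v (pd (sdir 1) (UU u 0)) (t, x) :=
    fun v => pd_sub _ _ (dpdU _ _ _) (dpdU _ _ _) v
  have hSe : ∀ v, pd v (SS u h) (t, x) = pd v h (t, x)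
      - 1 / 2 * ∑ j, (UU u j (t, x) * pd v (UU u j) (t, x)
          + UU u j (t, x) * pd v (UU u j) (t, x)) := by
    intro v
    have dsum : DifferentiableAt ℝ (fun q => ∑ j, UU u j q * UU u j q) (t, x) :=
      DifferentiableAt.fun_sum (fun j _ => (dU j _).mul (dU j _))
    have h1 : pd v (SS u h) (t, x) = pd v h (t, x)
        - pd v (fun q => 1 / 2 * ∑ j, UU u j q * UU u j q) (t, x) :=
      pd_sub h _ (dh _) (dsum.const_mul _) v
    rw [h1, pd_const_mul _ dsum _ v,
      pd_sum (fun j q => UU u j q * UU u j q) (fun j => (dU j _).mul (dU j _)) v,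
      Finset.sum_congr rfl (fun j _ => pd_mul (UU u j) (UU u j) (dU j _) (dU j _) v)]
  have hPhie : ∀ i, pd (sdir i) (PHI u h i) (t, x)
      = (TT u (t, x) * pd (sdir i) (UU u i) (t, x) + UU u i (t, x) * pd (sdir i) (TT u) (t, x))
        + (SS u h (t, x) * pd (sdir i) (WW u i) (t, x)
            + WW u i (t, x) * pd (sdir i) (SS u h) (t, x)) := by
    intro i
    have h1 : pd (sdir i) (PHI u h i) (t, x)
        = pd (sdir i) (fun q => TT u q * UU u i q) (t, x)
          + pd (sdir i) (fun q => SS u h q * WW u i q) (t, x) :=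
      pd_add _ _ ((dT _).mul (dU i _)) ((dS _).mul (dW i _)) _
    rw [h1, pd_mul _ _ (dT _) (dU i _) _, pd_mul _ _ (dS _) (dW i _) _]
  -- Schwarz symmetry normalizations
  have cU10 : ∀ i, pd (sdir 1) (pd (sdir 0) (UU u i)) (t, x)
      = pd (sdir 0) (pd (sdir 1) (UU u i)) (t, x) :=
    fun i => pd_comm (UU u i) (hU2 i) (sdir 1) (sdir 0) (t, x)
  have cU20 : ∀ i, pd (sdir 2) (pd (sdir 0) (UU u i)) (t, x)
      = pd (sdir 0) (pd (sdir 2) (UU u i)) (t, x) :=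
    fun i => pd_comm (UU u i) (hU2 i) (sdir 2) (sdir 0) (t, x)
  have cU21 : ∀ i, pd (sdir 2) (pd (sdir 1) (UU u i)) (t, x)
      = pd (sdir 1) (pd (sdir 2) (UU u i)) (t, x) :=
    fun i => pd_comm (UU u i) (hU2 i) (sdir 2) (sdir 1) (t, x)
  have ch10 : pd (sdir 1) (pd (sdir 0) h) (t, x) = pd (sdir 0) (pd (sdir 1) h) (t, x) :=
    pd_comm h hh (sdir 1) (sdir 0) (t, x)
  have ch20 : pd (sdir 2) (pd (sdir 0) h) (t, x) = pd (sdir 0) (pd (sdir 2) h) (t, x) :=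
    pd_comm h hh (sdir 2) (sdir 0) (t, x)
  have ch21 : pd (sdir 2) (pd (sdir 1) h) (t, x) = pd (sdir 1) (pd (sdir 2) h) (t, x) :=
    pd_comm h hh (sdir 2) (sdir 1) (t, x)
  simp only [Fin.sum_univ_three]
  simp only [hPhie]
  simp only [hTexp]
  simp only [Fin.sum_univ_three]
  simp only [hW0e, hW1e, hW2e]
  simp only [hSe]
  simp only [Fin.sum_univ_three]
  simp only [e2]
  simp only [e1']
  simp only [Fin.sum_univ_three]
  simp only [cU10, cU20, cU21, ch10, ch20, ch21]
  simp only [TT, SS, WW, Matrix.cons_val_zero, Matrix.cons_val_one, Matrix.head_cons,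
    Matrix.cons_val_two, Matrix.tail_cons, Fin.sum_univ_three]
  ring
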